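/- arXiv:1805.11430 — 2 statements merged into one kernel-verified Lean document; each statement's English description precedes it below -/
import Mathlib

section
/- For every y ∈ [0,1]: −Σ_{n=1}^N D_n·KI_n(y) = y, where D_n = S_n^{-1}·(Σ_{j∈Ω} (p_j/k_{n,j})·d_{n,j}) and S_n = Σ_{j∈Ω} p_j/k_{n,j}. -/
open Set

noncomputable section

/-- `T_ω = T_{ω_t} ∘ ⋯ ∘ T_{ω_1}` (head of the list applied first). -/
def rwordApply (T : ℕ → ℝ → ℝ) : List ℕ → ℝ → ℝ
  | [], y => y
  | j :: ω, y => rwordApply T ω (T j y)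

/-- the weighted slope product `δ_ω(y,|ω|)`; `ι x` is the index of the
partition interval containing `x`. -/
def rdelta (p : ℕ → ℝ) (k : ℕ → ℕ → ℝ) (ι : ℝ → ℕ) (T : ℕ → ℝ → ℝ) :
    List ℕ → ℝ → ℝ
  | [], _ => 1
  | j :: ω, y => p j / k (ι y) j * rdelta p k ι T ω (T j y)

/-- the random piecewise linear map with slopes `k`, intercepts `d`. -/
def Tpl (k d : ℕ → ℕ → ℝ) (ι : ℝ → ℕ) (j : ℕ) (x : ℝ) : ℝ :=
  k (ι x) j * x + d (ι x) j

/-- finite words with letters in `Ωs`. -/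
def Words (Ωs : Set ℕ) : Type := {ω : List ℕ // ∀ j ∈ ω, j ∈ Ωs}

/-- `KI_n(y) = Σ_{t≥1} Σ_{ω ∈ Ωᵗ} δ_ω(y,t)·1_{I_n}(T_{ω₁^{t-1}}(y))`. -/
def KI (Ωs : Set ℕ) (p : ℕ → ℝ) (k : ℕ → ℕ → ℝ) (ι : ℝ → ℕ) (T : ℕ → ℝ → ℝ)
    (n : ℕ) (y : ℝ) : ℝ :=
  ∑' ω : {ω : List ℕ // (∀ j ∈ ω, j ∈ Ωs) ∧ ω ≠ []},
    if ι (rwordApply T ω.1.dropLast y) = n then rdelta p k ι T ω.1 y else 0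

/-- `KA_i(y) = Σ_{t≥0} Σ_{ω ∈ Ωᵗ} δ_ω(y,t)·1_{I_1 ∪ ⋯ ∪ I_i}(T_ω(y))`. -/
def KA (Ωs : Set ℕ) (p : ℕ → ℝ) (k : ℕ → ℕ → ℝ) (ι : ℝ → ℕ) (T : ℕ → ℝ → ℝ)
    (i : ℕ) (y : ℝ) : ℝ :=
  ∑' ω : Words Ωs,
    if ι (rwordApply T ω.1 y) ≤ i then rdelta p k ι T ω.1 y else 0

/-- `KB_i(y) = Σ_{t≥0} Σ_{ω ∈ Ωᵗ} δ_ω(y,t)·1_{I_{i+1} ∪ ⋯ ∪ I_N}(T_ω(y))`. -/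
def KB (Ωs : Set ℕ) (p : ℕ → ℝ) (k : ℕ → ℕ → ℝ) (ι : ℝ → ℕ) (T : ℕ → ℝ → ℝ)
    (i : ℕ) (y : ℝ) : ℝ :=
  ∑' ω : Words Ωs,
    if i < ι (rwordApply T ω.1 y) then rdelta p k ι T ω.1 y else 0

/-- `S_n = Σ_{j∈Ω} p_j / k_{n,j}`, the average inverse slope on `I_n`. -/
def Sav (Ωs : Set ℕ) (p : ℕ → ℝ) (k : ℕ → ℕ → ℝ) (n : ℕ) : ℝ :=
  ∑' j : Ωs, p j.1 / k n j.1

/-!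
Write `δ_ω = δ_ω(y)` and `x_ω = T_ω(y)`. Condition (A2) makes the total weight of the words of
length `t` at most `ρ ^ t`, so `∑_ω |δ_ω| < ∞` and every rearrangement below is legitimate.
Decomposing a nonempty word by its last letter, `δ_{ωj} x_{ωj} = δ_ω (p_j / k_{n,j}) T_j(x_ω)`
with `n` the interval of `x_ω`, and averaging the affine branches over `j` gives
`x_ω + S_n D_n`. Hence `∑_ω δ_ω x_ω = y + ∑_ω δ_ω x_ω + ∑_ω δ_ω S_{n(ω)} D_{n(ω)}`, i.e. the last
sum is `-y`; sorting it by intervals and using `KI_n = S_n ∑_{x_ω ∈ I_n} δ_ω` gives the theorem.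
-/

open scoped ENNReal

-- `Words` is a plain `def`, which hides its `Subtype` structure from `rw` and `simp`;
-- this reducible copy does not.
abbrev Word (Ωs : Set ℕ) : Type := {ω : List ℕ // ∀ j ∈ ω, j ∈ Ωs}

abbrev NonemptyWord (Ωs : Set ℕ) : Type := {ω : List ℕ // (∀ j ∈ ω, j ∈ Ωs) ∧ ω ≠ []}

namespace Word

variable (Ωs : Set ℕ)

def snocEquiv : Word Ωs × Ωs ≃ NonemptyWord Ωs where
  toFun q := ⟨q.1.1 ++ [q.2.1], fun j hj => by
    rcases List.mem_append.1 hj with h | h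
    · exact q.1.2 j h
    · exact List.mem_singleton.1 h ▸ q.2.2, by simp⟩
  invFun ω := (⟨ω.1.dropLast, fun j hj => ω.2.1 j (List.dropLast_subset _ hj)⟩,
    ⟨ω.1.getLast ω.2.2, ω.2.1 _ (List.getLast_mem ω.2.2)⟩)
  left_inv q := Prod.ext (Subtype.ext (by simp)) (Subtype.ext (by simp))
  right_inv ω := Subtype.ext (List.dropLast_append_getLast ω.2.2)

def unitSumNonemptyEquiv : Unit ⊕ NonemptyWord Ωs ≃ Word Ωs where
  toFun
    | .inl _ => ⟨[], by simp⟩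
    | .inr ω => ⟨ω.1, ω.2.1⟩
  invFun ω := if h : ω.1 = [] then .inl () else .inr ⟨ω.1, ω.2, h⟩
  left_inv
    | .inl _ => rfl
    | .inr ω => dif_neg ω.2.2
  right_inv ω := by
    by_cases h : ω.1 = []
    · simp only [h, dite_true]
      exact Subtype.ext h.symm
    · simp only [h, dite_false]

end Word

section WordSums

variable {Ωs : Set ℕ} {α : Type*}

theorem tsum_word_eq_add_tsum_nonemptyWord [AddCommMonoid α] [TopologicalSpace α]
    [ContinuousAdd α] [T2Space α] {f : List ℕ → α}
    (hf : Summable fun ω : NonemptyWord Ωs => f ω.1) :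
    ∑' ω : Word Ωs, f ω.1 = f [] + ∑' ω : NonemptyWord Ωs, f ω.1 := by
  rw [← (Word.unitSumNonemptyEquiv Ωs).tsum_eq, Summable.tsum_sum .of_finite hf]
  congr 1
  exact (tsum_fintype _).trans (Fintype.sum_unique _)

theorem tsum_nonemptyWord_eq_tsum_tsum_snoc [AddCommGroup α] [UniformSpace α]
    [IsUniformAddGroup α] [CompleteSpace α] [T0Space α] {f : List ℕ → α}
    (hf : Summable fun ω : NonemptyWord Ωs => f ω.1) :
    ∑' ω : NonemptyWord Ωs, f ω.1 = ∑' ω : Word Ωs, ∑' j : Ωs, f (ω.1 ++ [j.1]) := by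
  rw [← (Word.snocEquiv Ωs).tsum_eq]
  exact ((Word.snocEquiv Ωs).summable_iff.2 hf).tsum_prod

theorem Summable.nonemptyWord [AddCommGroup α] [UniformSpace α] [IsUniformAddGroup α]
    [CompleteSpace α] {f : List ℕ → α} (hf : Summable fun ω : Word Ωs => f ω.1) :
    Summable fun ω : NonemptyWord Ωs => f ω.1 :=
  hf.comp_injective ((Word.unitSumNonemptyEquiv Ωs).injective.comp Sum.inr_injective)

end WordSums

section Orbit

variable {Ωs : Set ℕ} {p : ℕ → ℝ} {k : ℕ → ℕ → ℝ} {ι : ℝ → ℕ} {T : ℕ → ℝ → ℝ}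

theorem rwordApply_append_singleton (ω : List ℕ) (j : ℕ) (y : ℝ) :
    rwordApply T (ω ++ [j]) y = T j (rwordApply T ω y) := by
  induction ω generalizing y with
  | nil => rfl
  | cons a ω ih => exact ih (T a y)

theorem rdelta_append_singleton (ω : List ℕ) (j : ℕ) (y : ℝ) :
    rdelta p k ι T (ω ++ [j]) y =
      rdelta p k ι T ω y * (p j / k (ι (rwordApply T ω y)) j) := by
  induction ω generalizing y with
  | nil => simp [rdelta, rwordApply]
  | cons a ω ih => simp only [List.cons_append, rdelta, rwordApply, ih, mul_assoc]

theorem rwordApply_mem {s : Set ℝ} (hT : ∀ j ∈ Ωs, MapsTo (T j) s s) {ω : List ℕ}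
    (hω : ∀ j ∈ ω, j ∈ Ωs) {y : ℝ} (hy : y ∈ s) : rwordApply T ω y ∈ s := by
  induction ω generalizing y with
  | nil => exact hy
  | cons a ω ih =>
    exact ih (fun j hj => hω j (List.mem_cons_of_mem a hj)) (hT a (hω a List.mem_cons_self) hy)

theorem tsum_enorm_rdelta_length_eq_le {s : Set ℝ} {r : ℝ≥0∞}
    (hT : ∀ j ∈ Ωs, MapsTo (T j) s s) (hA : ∀ x ∈ s, ∑' j : Ωs, ‖p j / k (ι x) j‖ₑ ≤ r)
    {y : ℝ} (hy : y ∈ s) (t : ℕ) :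
    ∑' ω : Word Ωs, (if ω.1.length = t then ‖rdelta p k ι T ω.1 y‖ₑ else 0) ≤ r ^ t := by
  induction t with
  | zero =>
    have hlen : ∀ ω : NonemptyWord Ωs, ω.1.length ≠ 0 := fun ω => by simpa using ω.2.2
    rw [tsum_word_eq_add_tsum_nonemptyWord
      (f := fun ω => if ω.length = 0 then ‖rdelta p k ι T ω y‖ₑ else 0) ENNReal.summable]
    simp [hlen, rdelta]
  | succ t ih =>
    calc ∑' ω : Word Ωs, (if ω.1.length = t + 1 then ‖rdelta p k ι T ω.1 y‖ₑ else 0)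
        = ∑' ω : Word Ωs, ∑' j : Ωs, (if ω.1.length = t then
            ‖rdelta p k ι T ω.1 y‖ₑ * ‖p j / k (ι (rwordApply T ω.1 y)) j‖ₑ else 0) := by
          rw [tsum_word_eq_add_tsum_nonemptyWord
            (f := fun ω => if ω.length = t + 1 then ‖rdelta p k ι T ω y‖ₑ else 0)
            ENNReal.summable, ← (Word.snocEquiv Ωs).tsum_eq, ENNReal.tsum_prod']
          simp [Word.snocEquiv, rdelta_append_singleton, enorm_mul]
      _ = ∑' ω : Word Ωs, (if ω.1.length = t then ‖rdelta p k ι T ω.1 y‖ₑ *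
            ∑' j : Ωs, ‖p j / k (ι (rwordApply T ω.1 y)) j‖ₑ else 0) := by
          congr! with ω
          split_ifs <;> simp [ENNReal.tsum_mul_left]
      _ ≤ ∑' ω : Word Ωs,
            (if ω.1.length = t then ‖rdelta p k ι T ω.1 y‖ₑ else 0) * r := by
          gcongr with ω
          split_ifs
          · exact mul_le_mul_right (hA _ (rwordApply_mem hT ω.2 hy)) _
          · simp
      _ ≤ r ^ t * r := by rw [ENNReal.tsum_mul_right]; gcongr
      _ = r ^ (t + 1) := (pow_succ r t).symm

theorem summable_norm_rdelta {s : Set ℝ} {ρ : ℝ} (hT : ∀ j ∈ Ωs, MapsTo (T j) s s)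
    (hA : ∀ x ∈ s, Summable (fun j : Ωs => ‖p j / k (ι x) j‖) ∧
      ∑' j : Ωs, ‖p j / k (ι x) j‖ ≤ ρ)
    (hρ : ρ < 1) {y : ℝ} (hy : y ∈ s) :
    Summable fun ω : Word Ωs => ‖rdelta p k ι T ω.1 y‖ := by
  have hA' : ∀ x ∈ s, ∑' j : Ωs, ‖p j / k (ι x) j‖ₑ ≤ ENNReal.ofReal ρ := by
    intro x hx
    obtain ⟨hsum, hle⟩ := hA x hx
    simp_rw [← ofReal_norm]
    rw [← ENNReal.ofReal_tsum_of_nonneg (fun _ => norm_nonneg _) hsum]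
    exact ENNReal.ofReal_le_ofReal hle
  rw [← tsum_enorm_ne_top_iff_summable_norm]
  refine ne_top_of_le_ne_top
    (ENNReal.inv_ne_top.2 (tsub_pos_of_lt (ENNReal.ofReal_lt_one.2 hρ)).ne') ?_
  calc ∑' ω : Word Ωs, ‖rdelta p k ι T ω.1 y‖ₑ
      = ∑' ω : Word Ωs, ∑' t : ℕ,
          if ω.1.length = t then ‖rdelta p k ι T ω.1 y‖ₑ else 0 :=
        tsum_congr fun ω => (tsum_ite_eq' ω.1.length fun _ => ‖rdelta p k ι T ω.1 y‖ₑ).symm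
    _ = ∑' t : ℕ, ∑' ω : Word Ωs,
          if ω.1.length = t then ‖rdelta p k ι T ω.1 y‖ₑ else 0 := ENNReal.tsum_comm
    _ ≤ ∑' t : ℕ, ENNReal.ofReal ρ ^ t :=
        ENNReal.tsum_le_tsum (tsum_enorm_rdelta_length_eq_le hT hA' hy)
    _ = (1 - ENNReal.ofReal ρ)⁻¹ := ENNReal.tsum_geometric _

end Orbit

section Visits

variable {Ωs : Set ℕ} {p : ℕ → ℝ} {k : ℕ → ℕ → ℝ} {ι : ℝ → ℕ} {T : ℕ → ℝ → ℝ} {y : ℝ}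

def weightedVisits (Ωs : Set ℕ) (p : ℕ → ℝ) (k : ℕ → ℕ → ℝ) (ι : ℝ → ℕ) (T : ℕ → ℝ → ℝ)
    (n : ℕ) (y : ℝ) : ℝ :=
  ∑' ω : Word Ωs, if ι (rwordApply T ω.1 y) = n then rdelta p k ι T ω.1 y else 0

theorem summable_ite_rdelta (hδ : Summable fun ω : Word Ωs => ‖rdelta p k ι T ω.1 y‖)
    (n : ℕ) :
    Summable fun ω : Word Ωs => if ι (rwordApply T ω.1 y) = n then rdelta p k ι T ω.1 y else 0 :=
  hδ.of_norm_bounded fun ω => by split_ifs <;> simp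

theorem KI_eq_Sav_mul_weightedVisits
    (hδ : Summable fun ω : Word Ωs => ‖rdelta p k ι T ω.1 y‖) (n : ℕ) :
    KI Ωs p k ι T n y = Sav Ωs p k n * weightedVisits Ωs p k ι T n y := by
  have hsum : Summable fun ω : NonemptyWord Ωs =>
      if ι (rwordApply T ω.1.dropLast y) = n then rdelta p k ι T ω.1 y else 0 :=
    (hδ.nonemptyWord (f := fun ω => ‖rdelta p k ι T ω y‖)).of_norm_bounded
      fun ω => by split_ifs <;> simp
  rw [KI, tsum_nonemptyWord_eq_tsum_tsum_snoc
    (f := fun ω => if ι (rwordApply T ω.dropLast y) = n then rdelta p k ι T ω y else 0) hsum,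
    weightedVisits, ← tsum_mul_left]
  refine tsum_congr fun ω => ?_
  simp only [List.dropLast_concat, rdelta_append_singleton]
  split_ifs with h
  · rw [h, tsum_mul_left, Sav, mul_comm]
  · simp

theorem hasSum_rdelta_mul_weightedVisits {s : Finset ℕ}
    (hδ : Summable fun ω : Word Ωs => ‖rdelta p k ι T ω.1 y‖)
    (hs : ∀ ω : Word Ωs, ι (rwordApply T ω.1 y) ∈ s) (c : ℕ → ℝ) :
    HasSum (fun ω : Word Ωs => rdelta p k ι T ω.1 y * c (ι (rwordApply T ω.1 y)))
      (∑ n ∈ s, c n * weightedVisits Ωs p k ι T n y) := by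
  refine (hasSum_sum fun n (_ : n ∈ s) =>
    (summable_ite_rdelta hδ n).hasSum.mul_left (c n)).congr_fun fun ω => ?_
  simp only [mul_ite, mul_zero, Finset.sum_ite_eq, if_pos (hs ω), mul_comm]

end Visits

section Affine

variable {Ωs : Set ℕ} {p : ℕ → ℝ} {k d : ℕ → ℕ → ℝ} {ι : ℝ → ℕ}

-- `S_n D_n` in the notation of the statement.
def weightedIntercept (Ωs : Set ℕ) (p : ℕ → ℝ) (k d : ℕ → ℕ → ℝ) (n : ℕ) : ℝ :=
  ∑' j : Ωs, p j / k n j * d n j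

theorem hasSum_div_mul_Tpl {x : ℝ} (hpsum : HasSum (fun j : Ωs => p j) 1)
    (hk : ∀ j ∈ Ωs, k (ι x) j ≠ 0) (hpk : Summable fun j : Ωs => ‖p j / k (ι x) j‖)
    (hTx : ∀ j ∈ Ωs, Tpl k d ι j x ∈ Icc (0:ℝ) 1) :
    HasSum (fun j : Ωs => p j / k (ι x) j * Tpl k d ι j x)
      (x + weightedIntercept Ωs p k d (ι x)) := by
  have hsplit : ∀ j : Ωs,
      p j / k (ι x) j * Tpl k d ι j x = p j * x + p j / k (ι x) j * d (ι x) j := fun j => by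
    rw [Tpl]
    field_simp [hk j j.2]
  have hsum : Summable fun j : Ωs => p j / k (ι x) j * Tpl k d ι j x :=
    hpk.of_norm_bounded fun j => by
      rw [norm_mul, Real.norm_of_nonneg (hTx j j.2).1]
      exact mul_le_of_le_one_right (norm_nonneg _) (hTx j j.2).2
  have hd : Summable fun j : Ωs => p j / k (ι x) j * d (ι x) j := by
    simpa only [hsplit, add_sub_cancel_left] using hsum.sub (hpsum.summable.mul_right x)
  simp only [hsplit, weightedIntercept]
  simpa only [one_mul] using (hpsum.mul_right x).add hd.hasSum

theorem tsum_rdelta_mul_weightedIntercept {y : ℝ}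
    (hT : ∀ j ∈ Ωs, MapsTo (Tpl k d ι j) (Icc 0 1) (Icc 0 1))
    (hpsum : HasSum (fun j : Ωs => p j) 1) (hk : ∀ x ∈ Icc (0:ℝ) 1, ∀ j ∈ Ωs, k (ι x) j ≠ 0)
    (hpk : ∀ x ∈ Icc (0:ℝ) 1, Summable fun j : Ωs => ‖p j / k (ι x) j‖)
    (hδ : Summable fun ω : Word Ωs => ‖rdelta p k ι (Tpl k d ι) ω.1 y‖)
    (hc : Summable fun ω : Word Ωs => rdelta p k ι (Tpl k d ι) ω.1 y *
      weightedIntercept Ωs p k d (ι (rwordApply (Tpl k d ι) ω.1 y)))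
    (hy : y ∈ Icc (0:ℝ) 1) :
    ∑' ω : Word Ωs, rdelta p k ι (Tpl k d ι) ω.1 y *
      weightedIntercept Ωs p k d (ι (rwordApply (Tpl k d ι) ω.1 y)) = -y := by
  have hx : ∀ ω : Word Ωs, rwordApply (Tpl k d ι) ω.1 y ∈ Icc (0:ℝ) 1 :=
    fun ω => rwordApply_mem hT ω.2 hy
  have hδx : Summable fun ω : Word Ωs =>
      rdelta p k ι (Tpl k d ι) ω.1 y * rwordApply (Tpl k d ι) ω.1 y :=
    hδ.of_norm_bounded fun ω => by
      rw [norm_mul, Real.norm_of_nonneg (hx ω).1]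
      exact mul_le_of_le_one_right (norm_nonneg _) (hx ω).2
  have hδx' : Summable fun ω : NonemptyWord Ωs =>
      rdelta p k ι (Tpl k d ι) ω.1 y * rwordApply (Tpl k d ι) ω.1 y :=
    hδx.nonemptyWord (f := fun ω => rdelta p k ι (Tpl k d ι) ω y * rwordApply (Tpl k d ι) ω y)
  have hsnoc : ∑' ω : NonemptyWord Ωs,
      rdelta p k ι (Tpl k d ι) ω.1 y * rwordApply (Tpl k d ι) ω.1 y =
        ∑' ω : Word Ωs, rdelta p k ι (Tpl k d ι) ω.1 y * (rwordApply (Tpl k d ι) ω.1 y +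
          weightedIntercept Ωs p k d (ι (rwordApply (Tpl k d ι) ω.1 y))) := by
    rw [tsum_nonemptyWord_eq_tsum_tsum_snoc
      (f := fun ω => rdelta p k ι (Tpl k d ι) ω y * rwordApply (Tpl k d ι) ω y) hδx']
    refine tsum_congr fun ω => ?_
    simp only [rdelta_append_singleton, rwordApply_append_singleton, mul_assoc, tsum_mul_left]
    rw [(hasSum_div_mul_Tpl hpsum (hk _ (hx ω)) (hpk _ (hx ω))
      fun j hj => hT j hj (hx ω)).tsum_eq]
  have hsplit := tsum_word_eq_add_tsum_nonemptyWord
    (f := fun ω => rdelta p k ι (Tpl k d ι) ω y * rwordApply (Tpl k d ι) ω y) hδx'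
  simp only [hsnoc, mul_add, hδx.tsum_add hc, rdelta, rwordApply, one_mul] at hsplit
  linarith

end Affine

theorem stmt_5_general (Ωs : Set ℕ) (N : ℕ) (p : ℕ → ℝ) (ρ : ℝ)
    (hρ1 : ρ < 1)
    (hp : ∀ j ∈ Ωs, 0 < p j) (hpsum : HasSum (fun j : Ωs => p j.1) 1)
    (k d : ℕ → ℕ → ℝ) (ι : ℝ → ℕ)
    (hι : ∀ x ∈ Icc (0:ℝ) 1, ι x ∈ Finset.Icc 1 N)
    (hk : ∀ n ∈ Finset.Icc 1 N, ∀ j ∈ Ωs, k n j ≠ 0)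
    (hT : ∀ j ∈ Ωs, ∀ x ∈ Icc (0:ℝ) 1, Tpl k d ι j x ∈ Icc (0:ℝ) 1)
    (hA2 : ∀ n ∈ Finset.Icc 1 N,
      Summable (fun j : Ωs => p j.1 / |k n j.1|) ∧
        ∑' j : Ωs, p j.1 / |k n j.1| ≤ ρ)
    (hS : ∀ n ∈ Finset.Icc 1 N, Sav Ωs p k n ≠ 0) :
    ∀ y ∈ Icc (0:ℝ) 1,
      -∑ n ∈ Finset.Icc 1 N,
          ((Sav Ωs p k n)⁻¹ * ∑' j : Ωs, p j.1 / k n j.1 * d n j.1) *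
            KI Ωs p k ι (Tpl k d ι) n y = y := by
  intro y hy
  have hnorm : ∀ n, (fun j : Ωs => ‖p j / k n j‖) = fun j : Ωs => p j / |k n j| := fun n =>
    funext fun j => by rw [norm_div, Real.norm_of_nonneg (hp j j.2).le, Real.norm_eq_abs]
  have hA : ∀ x ∈ Icc (0:ℝ) 1, Summable (fun j : Ωs => ‖p j / k (ι x) j‖) ∧
      ∑' j : Ωs, ‖p j / k (ι x) j‖ ≤ ρ := fun x hx => hnorm (ι x) ▸ hA2 _ (hι x hx)
  have hδ := summable_norm_rdelta hT hA hρ1 hy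
  have hsort := hasSum_rdelta_mul_weightedVisits hδ (fun ω => hι _ (rwordApply_mem hT ω.2 hy))
    (weightedIntercept Ωs p k d)
  have hneg := tsum_rdelta_mul_weightedIntercept hT hpsum (fun x hx => hk _ (hι x hx))
    (fun x hx => (hA x hx).1) hδ hsort.summable hy
  rw [neg_eq_iff_eq_neg, ← hneg, hsort.tsum_eq]
  refine Finset.sum_congr rfl fun n hn => ?_
  rw [KI_eq_Sav_mul_weightedVisits hδ, weightedIntercept]
  field_simp [hS n hn]

/-- for every `y ∈ [0,1]`, `−Σ_{n=1}^N D_n · KI_n(y) = y`,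
where `D_n = S_n⁻¹ · Σ_j (p_j/k_{n,j})·d_{n,j}`. -/
theorem stmt_5 (Ωs : Set ℕ) (N : ℕ) (hN : 1 ≤ N) (p : ℕ → ℝ) (ρ : ℝ)
    (hρ0 : 0 < ρ) (hρ1 : ρ < 1)
    (hp : ∀ j ∈ Ωs, 0 < p j) (hpsum : HasSum (fun j : Ωs => p j.1) 1)
    (k d : ℕ → ℕ → ℝ) (ι : ℝ → ℕ)
    (hι : ∀ x ∈ Icc (0:ℝ) 1, ι x ∈ Finset.Icc 1 N)
    (hk : ∀ n ∈ Finset.Icc 1 N, ∀ j ∈ Ωs, k n j ≠ 0)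
    (hT : ∀ j ∈ Ωs, ∀ x ∈ Icc (0:ℝ) 1, Tpl k d ι j x ∈ Icc (0:ℝ) 1)
    (hA2 : ∀ n ∈ Finset.Icc 1 N,
      Summable (fun j : Ωs => p j.1 / |k n j.1|) ∧
        ∑' j : Ωs, p j.1 / |k n j.1| ≤ ρ)
    (hS : ∀ n ∈ Finset.Icc 1 N, Sav Ωs p k n ≠ 0) :
    ∀ y ∈ Icc (0:ℝ) 1,
      -∑ n ∈ Finset.Icc 1 N,
          ((Sav Ωs p k n)⁻¹ * ∑' j : Ωs, p j.1 / k n j.1 * d n j.1) *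
            KI Ωs p k ι (Tpl k d ι) n y = y :=
  stmt_5_general Ωs N p ρ hρ1 hp hpsum k d ι hι hk hT hA2 hS
end
end

section
/- For y ∈ [0,1], lim_{x↓z_ℓ} L_y(x) = KB_ℓ(y), where L_y(x) = Σ_{t≥0} Σ_{ω∈Ωᵗ} δ_ω(y,t)·1_{[0,T_ω(y))}(x) and KB_ℓ(y) = Σ_{t≥0} Σ_{ω∈Ωᵗ} δ_ω(y,t)·1_{B_ℓ}(T_ω(y)) with B_ℓ = I_{ℓ+1} ∪ ... ∪ I_N, assuming z_ℓ ∈ I_ℓ. -/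
/-!
Each term of `L_y(x)` is `δ_ω(y)` times the indicator of `x ∈ [0, T_ω(y))`; as `x ↓ z_ℓ` this
indicator is eventually constant, equal to `1` exactly when `z_ℓ < T_ω(y)`, i.e. when `T_ω(y)`
lies in `B_ℓ`. The terms are dominated by `|δ_ω(y)|`, which is summable over all words: splitting
off the first letter and using `Σ_j p_j / |k_{n,j}| ≤ ρ < 1`, every finite partial sum is at most
`1 + ρ (1 - ρ)⁻¹ = (1 - ρ)⁻¹`. Tannery's theorem then passes the limit through the sum.
-/

open Set

noncomputable section

/-- `a_{i,j} = k_{i,j} z_i + d_{i,j}`, the left limit of `T_j` at `z_i`. -/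
def aPt (k d : ℕ → ℕ → ℝ) (z : ℕ → ℝ) (i j : ℕ) : ℝ := k i j * z i + d i j

/-- `b_{i,j} = k_{i+1,j} z_i + d_{i+1,j}`, the right limit of `T_j` at `z_i`. -/
def bPt (k d : ℕ → ℕ → ℝ) (z : ℕ → ℝ) (i j : ℕ) : ℝ := k (i + 1) j * z i + d (i + 1) j

/-- the entries `μ_{n,i}` of the fundamental matrix (Definition 3.2). -/
def fundM (Ωs : Set ℕ) (p : ℕ → ℝ) (k d : ℕ → ℕ → ℝ) (ι : ℝ → ℕ) (z : ℕ → ℝ)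
    (n i : ℕ) : ℝ :=
  ∑' j : Ωs,
    ((if n = i then p j.1 / k i j.1 else 0) -
      (if n = i + 1 then p j.1 / k (i + 1) j.1 else 0) +
      (p j.1 / k i j.1 * KI Ωs p k ι (Tpl k d ι) n (aPt k d z i j.1) -
        p j.1 / k (i + 1) j.1 * KI Ωs p k ι (Tpl k d ι) n (bPt k d z i j.1)))

/-- `L_y(x) = Σ_{t≥0} Σ_{ω∈Ωᵗ} δ_ω(y,t)·1_{[0,T_ω(y))}(x)`. -/
def Lfun (Ωs : Set ℕ) (p : ℕ → ℝ) (k : ℕ → ℕ → ℝ) (ι : ℝ → ℕ) (T : ℕ → ℝ → ℝ)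
    (y x : ℝ) : ℝ :=
  ∑' ω : Words Ωs,
    if x ∈ Ico (0:ℝ) (rwordApply T ω.1 y) then rdelta p k ι T ω.1 y else 0

/-- `h_γ(x) = Σ_{m=1}^{N−1} γ_m Σ_{ℓ∈Ω} [(p_ℓ/k_{m,ℓ}) L_{a_{m,ℓ}}(x) −
(p_ℓ/k_{m+1,ℓ}) L_{b_{m,ℓ}}(x)]`. -/
def hFun (Ωs : Set ℕ) (N : ℕ) (p : ℕ → ℝ) (k d : ℕ → ℕ → ℝ) (ι : ℝ → ℕ) (z : ℕ → ℝ)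
    (γ : ℕ → ℝ) (x : ℝ) : ℝ :=
  ∑ m ∈ Finset.Icc 1 (N - 1), γ m *
    ∑' j : Ωs,
      (p j.1 / k m j.1 * Lfun Ωs p k ι (Tpl k d ι) (aPt k d z m j.1) x -
        p j.1 / k (m + 1) j.1 * Lfun Ωs p k ι (Tpl k d ι) (bPt k d z m j.1) x)

open Filter Topology

section WordSums

variable {Ωs : Set ℕ} {p : ℕ → ℝ} {k : ℕ → ℕ → ℝ} {ι : ℝ → ℕ} {T : ℕ → ℝ → ℝ}
  {S : Set ℝ} {ρ : ℝ}

lemma rwordApply_mapsTo (hT : ∀ j ∈ Ωs, MapsTo (T j) S S) {ω : List ℕ}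
    (hω : ∀ j ∈ ω, j ∈ Ωs) : MapsTo (rwordApply T ω) S S := by
  induction ω with
  | nil => exact mapsTo_id S
  | cons j ω ih =>
    exact (ih fun i hi => hω i (List.mem_cons_of_mem j hi)).comp (hT j (hω j List.mem_cons_self))

lemma Finset.sum_le_nil_add_sum_cons {α : Type*} [DecidableEq α] {f : List α → ℝ} (hf : 0 ≤ f)
    (s : Finset (List α)) :
    ∑ ω ∈ s, f ω ≤
      f [] + ∑ j ∈ s.biUnion List.toFinset, ∑ ω ∈ (s.erase []).image List.tail, f (j :: ω) := by
  have hcover : s ⊆ insert [] ((s.biUnion List.toFinset ×ˢ (s.erase []).image List.tail).image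
      fun q => q.1 :: q.2) := by
    rintro (_ | ⟨j, ω⟩) hω
    · exact Finset.mem_insert_self _ _
    · refine Finset.mem_insert_of_mem (Finset.mem_image.2 ⟨(j, ω), ?_, rfl⟩)
      exact Finset.mem_product.2 ⟨Finset.mem_biUnion.2 ⟨_, hω, by simp⟩,
        Finset.mem_image.2 ⟨_, Finset.mem_erase.2 ⟨List.cons_ne_nil j ω, hω⟩, rfl⟩⟩
  calc ∑ ω ∈ s, f ω
      ≤ ∑ ω ∈ insert [] ((s.biUnion List.toFinset ×ˢ (s.erase []).image List.tail).image
          fun q => q.1 :: q.2), f ω :=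
        Finset.sum_le_sum_of_subset_of_nonneg hcover fun _ _ _ => hf _
    _ = _ := by
      rw [Finset.sum_insert (by simp),
        Finset.sum_image fun a _ b _ h => Prod.ext (List.cons.inj h).1 (List.cons.inj h).2,
        Finset.sum_product]

lemma sum_abs_rdelta_le_of_length_lt (hT : ∀ j ∈ Ωs, MapsTo (T j) S S)
    (hw : ∀ y ∈ S, ∀ J : Finset ℕ, ↑J ⊆ Ωs → ∑ j ∈ J, |p j / k (ι y) j| ≤ ρ) (hρ : ρ < 1)
    (M : ℕ) {y : ℝ} (hy : y ∈ S) {s : Finset (List ℕ)}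
    (hs : ∀ ω ∈ s, (∀ j ∈ ω, j ∈ Ωs) ∧ ω.length < M) :
    ∑ ω ∈ s, |rdelta p k ι T ω y| ≤ (1 - ρ)⁻¹ := by
  classical
  have hC : 0 ≤ (1 - ρ)⁻¹ := inv_nonneg.2 (sub_nonneg.2 hρ.le)
  induction M generalizing y s with
  | zero =>
    rw [Finset.eq_empty_of_forall_notMem fun ω hω => Nat.not_lt_zero _ (hs ω hω).2]
    simpa using hC
  | succ M ih =>
    have hJ : ↑(s.biUnion List.toFinset) ⊆ Ωs := by
      intro j hj
      obtain ⟨ω, hω, hjω⟩ := Finset.mem_biUnion.1 hj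
      exact (hs ω hω).1 j (List.mem_toFinset.1 hjω)
    have htail : ∀ ω ∈ (s.erase []).image List.tail, (∀ j ∈ ω, j ∈ Ωs) ∧ ω.length < M := by
      simp only [Finset.mem_image, Finset.mem_erase]
      rintro _ ⟨ω, ⟨hne, hω⟩, rfl⟩
      refine ⟨fun j hj => (hs ω hω).1 j (List.mem_of_mem_tail hj), ?_⟩
      have := (hs ω hω).2
      have := List.length_pos_iff.2 hne
      rw [List.length_tail]
      omega
    calc ∑ ω ∈ s, |rdelta p k ι T ω y|
        ≤ |rdelta p k ι T [] y| + ∑ j ∈ s.biUnion List.toFinset,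
            ∑ ω ∈ (s.erase []).image List.tail, |rdelta p k ι T (j :: ω) y| :=
          Finset.sum_le_nil_add_sum_cons (fun _ => abs_nonneg _) s
      _ = 1 + ∑ j ∈ s.biUnion List.toFinset,
            |p j / k (ι y) j| *
              ∑ ω ∈ (s.erase []).image List.tail, |rdelta p k ι T ω (T j y)| := by
          simp only [rdelta, abs_one, abs_mul, Finset.mul_sum]
      _ ≤ 1 + ∑ j ∈ s.biUnion List.toFinset, |p j / k (ι y) j| * (1 - ρ)⁻¹ := by
          gcongr with j hj
          exact ih (hT j (hJ hj) hy) htail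
      _ ≤ 1 + ρ * (1 - ρ)⁻¹ := by
          rw [← Finset.sum_mul]
          gcongr
          exact hw y hy _ hJ
      _ = (1 - ρ)⁻¹ := by
          field_simp [(sub_pos.2 hρ).ne']
          ring

lemma summable_abs_rdelta (hT : ∀ j ∈ Ωs, MapsTo (T j) S S)
    (hw : ∀ y ∈ S, ∀ J : Finset ℕ, ↑J ⊆ Ωs → ∑ j ∈ J, |p j / k (ι y) j| ≤ ρ) (hρ : ρ < 1)
    {y : ℝ} (hy : y ∈ S) : Summable fun ω : Words Ωs => |rdelta p k ι T ω.1 y| := by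
  refine summable_of_sum_le (c := (1 - ρ)⁻¹) (fun _ => abs_nonneg _) fun u => ?_
  refine (Finset.sum_map u ⟨fun ω : Words Ωs => ω.1, fun _ _ => Subtype.ext⟩
    fun ω => |rdelta p k ι T ω y|).symm.trans_le <|
      sum_abs_rdelta_le_of_length_lt hT hw hρ (u.sup fun ω => ω.1.length + 1) hy ?_
  simp only [Finset.mem_map]
  rintro _ ⟨ω, hω, rfl⟩
  exact ⟨ω.2, Nat.lt_of_succ_le (Finset.le_sup (f := fun ω : Words Ωs => ω.1.length + 1) hω)⟩

end WordSums

lemma eventually_mem_Ico_iff_nhdsGT {z c : ℝ} (hz : 0 ≤ z) :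
    ∀ᶠ x in 𝓝[>] z, (x ∈ Ico 0 c ↔ z < c) := by
  by_cases hzc : z < c
  · filter_upwards [Ioo_mem_nhdsGT hzc] with x hx
    simp only [mem_Ico, hz.trans hx.1.le, hx.2, hzc, and_self]
  · filter_upwards [self_mem_nhdsWithin] with x hx
    simp only [mem_Ico, hzc, iff_false, not_and, not_lt]
    exact fun _ => (not_lt.1 hzc).trans (le_of_lt hx)

lemma sum_abs_div_le_of_tsum_le {Ωs : Set ℕ} {p a : ℕ → ℝ} {ρ : ℝ} (hp : ∀ j ∈ Ωs, 0 < p j)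
    (hsum : Summable fun j : Ωs => p j.1 / |a j.1|) (hle : ∑' j : Ωs, p j.1 / |a j.1| ≤ ρ)
    {J : Finset ℕ} (hJ : ↑J ⊆ Ωs) : ∑ j ∈ J, |p j / a j| ≤ ρ := by
  classical
  calc ∑ j ∈ J, |p j / a j| = ∑ j ∈ J.subtype (· ∈ Ωs), p j.1 / |a j.1| := by
        rw [Finset.sum_subtype_of_mem (fun j => p j / |a j|) hJ]
        exact Finset.sum_congr rfl fun j hj => by rw [abs_div, abs_of_pos (hp j (hJ hj))]
    _ ≤ ∑' j : Ωs, p j.1 / |a j.1| :=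
        hsum.sum_le_tsum _ fun j _ => div_nonneg (hp j j.2).le (abs_nonneg _)
    _ ≤ ρ := hle

theorem stmt_13_general (Ωs : Set ℕ) (N : ℕ) (p : ℕ → ℝ) (ρ : ℝ)
    (hρ1 : ρ < 1)
    (hp : ∀ j ∈ Ωs, 0 < p j)
    (k d : ℕ → ℕ → ℝ) (ι : ℝ → ℕ) (z : ℕ → ℝ)
    (hι : ∀ x ∈ Icc (0:ℝ) 1, ι x ∈ Finset.Icc 1 N)
    (hT : ∀ j ∈ Ωs, ∀ x ∈ Icc (0:ℝ) 1, Tpl k d ι j x ∈ Icc (0:ℝ) 1)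
    (hA2 : ∀ n ∈ Finset.Icc 1 N,
      Summable (fun j : Ωs => p j.1 / |k n j.1|) ∧
        ∑' j : Ωs, p j.1 / |k n j.1| ≤ ρ)
    (ℓ : ℕ) (hzℓ : z ℓ ∈ Icc (0:ℝ) 1)
    -- `z_ℓ ∈ I_ℓ`, so that `B_ℓ = I_{ℓ+1} ∪ ⋯ ∪ I_N = (z_ℓ, 1]` inside `[0,1]`
    (hord : ∀ w ∈ Icc (0:ℝ) 1, (ℓ < ι w ↔ z ℓ < w))
    (y : ℝ) (hy : y ∈ Icc (0:ℝ) 1) :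
    Filter.Tendsto (fun x => Lfun Ωs p k ι (Tpl k d ι) y x)
      (nhdsWithin (z ℓ) (Ioi (z ℓ)))
      (nhds (KB Ωs p k ι (Tpl k d ι) ℓ y)) := by
  have hw : ∀ x ∈ Icc (0:ℝ) 1, ∀ J : Finset ℕ, ↑J ⊆ Ωs → ∑ j ∈ J, |p j / k (ι x) j| ≤ ρ :=
    fun x hx _ hJ => sum_abs_div_le_of_tsum_le hp (hA2 _ (hι x hx)).1 (hA2 _ (hι x hx)).2 hJ
  refine tendsto_tsum_of_dominated_convergence (summable_abs_rdelta hT hw hρ1 hy)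
    (fun ω => ?_) (Eventually.of_forall fun x ω => ?_)
  · simp only [hord _ (rwordApply_mapsTo hT ω.2 hy)]
    refine tendsto_const_nhds.congr' ?_
    filter_upwards [eventually_mem_Ico_iff_nhdsGT hzℓ.1] with x hx
    exact if_congr hx.symm rfl rfl
  · split_ifs
    exacts [le_of_eq (Real.norm_eq_abs _), by simp]

/-- for `y ∈ [0,1]` and `z_ℓ ∈ I_ℓ`,
`lim_{x↓z_ℓ} L_y(x) = KB_ℓ(y)`. -/
theorem stmt_13 (Ωs : Set ℕ) (N : ℕ) (hN : 2 ≤ N) (p : ℕ → ℝ) (ρ : ℝ)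
    (hρ0 : 0 < ρ) (hρ1 : ρ < 1)
    (hp : ∀ j ∈ Ωs, 0 < p j) (hpsum : HasSum (fun j : Ωs => p j.1) 1)
    (k d : ℕ → ℕ → ℝ) (ι : ℝ → ℕ) (z : ℕ → ℝ)
    (hι : ∀ x ∈ Icc (0:ℝ) 1, ι x ∈ Finset.Icc 1 N)
    (hk : ∀ n ∈ Finset.Icc 1 N, ∀ j ∈ Ωs, k n j ≠ 0)
    (hT : ∀ j ∈ Ωs, ∀ x ∈ Icc (0:ℝ) 1, Tpl k d ι j x ∈ Icc (0:ℝ) 1)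
    (hA2 : ∀ n ∈ Finset.Icc 1 N,
      Summable (fun j : Ωs => p j.1 / |k n j.1|) ∧
        ∑' j : Ωs, p j.1 / |k n j.1| ≤ ρ)
    (ℓ : ℕ) (hℓ : ℓ ∈ Finset.Icc 1 (N - 1)) (hzℓ : z ℓ ∈ Icc (0:ℝ) 1)
    -- `z_ℓ ∈ I_ℓ`, so that `B_ℓ = I_{ℓ+1} ∪ ⋯ ∪ I_N = (z_ℓ, 1]` inside `[0,1]`
    (hord : ∀ w ∈ Icc (0:ℝ) 1, (ℓ < ι w ↔ z ℓ < w))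
    (y : ℝ) (hy : y ∈ Icc (0:ℝ) 1) :
    Filter.Tendsto (fun x => Lfun Ωs p k ι (Tpl k d ι) y x)
      (nhdsWithin (z ℓ) (Ioi (z ℓ)))
      (nhds (KB Ωs p k ι (Tpl k d ι) ℓ y)) :=
  stmt_13_general Ωs N p ρ hρ1 hp k d ι z hι hT hA2 ℓ hzℓ hord y hy
end
end
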